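/- arXiv:2605.13690 — 4 statements merged into one kernel-verified Lean document; each statement's English description precedes it below -/
import Mathlib

section
/- Let H₁ and H₂ be k-uniform hypergraphs on the same vertex set [n]. Then H₁ and H₂ are isomorphic (there is a bijection of [n] carrying the hyperedge set of H₁ onto the hyperedge set of H₂) if and only if hom(F, H₁) = hom(F, H₂) for every finite k-uniform hypergraph F. -/
/-!
Lovász's argument. Sorting the maps `[p] → [n]` by the partition of `[p]` into their fibres
writes `hom(F, H)` as `inj(F, H)` plus a sum of `inj(F / θ, H)` over the nontrivial
partitions `θ`; a quotient `F / θ` that collapses a hyperedge has no injective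
homomorphisms at all, and the others have fewer than `p` vertices. By strong induction on `p`,
equal homomorphism counts therefore force equal counts of injective homomorphisms. Taking
`F = H₁` and `F = H₂` gives injective homomorphisms `H₁ → H₂` and `H₂ → H₁`; the first is a
bijection of `[n]` mapping the edges of `H₁` into those of `H₂`, and the second shows that
`H₂` has no more edges than `H₁`, so the bijection is onto.
-/

/-- A `k`-uniform hypergraph on vertex set `Fin n`: the hyperedges are `k`-element
subsets of the vertices. -/
structure KUniformHypergraph (k n : ℕ) where
  edges : Finset (Finset (Fin n))
  uniform : ∀ e ∈ edges, e.card = k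

/-- `hom(F, H)`: the number of maps `φ : [p] → [n]` carrying every hyperedge of `F`
to a hyperedge of `H`. -/
noncomputable def homCount {k p n : ℕ} (F : KUniformHypergraph k p) (H : KUniformHypergraph k n) : ℕ :=
  Nat.card {φ : Fin p → Fin n // ∀ e ∈ F.edges, e.image φ ∈ H.edges}

open Finset Function

section Fibres

variable {α β : Type*} [Fintype α] [LinearOrder α] [DecidableEq β]

def fiberMin (φ : α → β) (x : α) : α :=
  ({y | φ y = φ x} : Finset α).min' ⟨x, by simp⟩

theorem apply_fiberMin (φ : α → β) (x : α) : φ (fiberMin φ x) = φ x := by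
  simpa [fiberMin] using min'_mem ({y | φ y = φ x} : Finset α) ⟨x, by simp⟩

theorem fiberMin_le (φ : α → β) (x : α) : fiberMin φ x ≤ x :=
  min'_le _ _ (by simp)

theorem fiberMin_eq_fiberMin_iff {φ : α → β} {x y : α} :
    fiberMin φ x = fiberMin φ y ↔ φ x = φ y := by
  refine ⟨fun h => by rw [← apply_fiberMin φ x, h, apply_fiberMin φ y], fun h => ?_⟩
  simp only [fiberMin, h]

theorem fiberMin_eq_of_fibers_eq {φ : α → β} {r : α → α} (hidem : ∀ x, r (r x) = r x)
    (hle : ∀ x, r x ≤ x) (hfib : ∀ x y, φ x = φ y ↔ r x = r y) : fiberMin φ = r := by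
  funext x
  refine le_antisymm (min'_le _ _ (by simpa using (hfib (r x) x).2 (hidem x))) ?_
  refine le_min' _ _ _ fun y hy => ?_
  rw [← (hfib y x).1 (by simpa using hy)]
  exact hle y

theorem fiberMin_eq_id_iff {φ : α → β} : fiberMin φ = id ↔ Injective φ := by
  refine ⟨fun h x y hxy => ?_, fun h => fiberMin_eq_of_fibers_eq (fun _ => rfl) le_refl
    fun x y => h.eq_iff⟩
  simpa [h] using fiberMin_eq_fiberMin_iff.2 hxy

end Fibres

section Retractions

variable {α : Type*} [Fintype α] [LinearOrder α]

variable (α) in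
/-- A partition of `α` is encoded by the map sending each element to the least element
of its block. -/
def retractions : Finset (α → α) :=
  {r | (∀ x, r (r x) = r x) ∧ ∀ x, r x ≤ x}

theorem mem_retractions {r : α → α} :
    r ∈ retractions α ↔ (∀ x, r (r x) = r x) ∧ ∀ x, r x ≤ x := by
  simp [retractions]

theorem fiberMin_mem_retractions {β : Type*} [DecidableEq β] (φ : α → β) :
    fiberMin φ ∈ retractions α :=
  mem_retractions.2
    ⟨fun x => fiberMin_eq_fiberMin_iff.2 (apply_fiberMin φ x), fiberMin_le φ⟩

/-- The quotient map of the partition encoded by `r`, with the blocks numbered by the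
elements of `Set.range r`. -/
noncomputable def toRange (r : α → α) : α → Fin (Fintype.card (Set.range r)) :=
  Fintype.equivFin _ ∘ Set.rangeFactorization r

noncomputable def ofRange (r : α → α) (j : Fin (Fintype.card (Set.range r))) : α :=
  ((Fintype.equivFin _).symm j : Set.range r)

theorem ofRange_toRange (r : α → α) (x : α) : ofRange r (toRange r x) = r x := by
  simp [ofRange, toRange, Set.rangeFactorization]

theorem toRange_eq_toRange_iff {r : α → α} {x y : α} : toRange r x = toRange r y ↔ r x = r y := by
  simp [toRange, Set.rangeFactorization]

theorem toRange_ofRange {r : α → α} (hidem : ∀ x, r (r x) = r x)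
    (j : Fin (Fintype.card (Set.range r))) :
    toRange r (ofRange r j) = j := by
  obtain ⟨x, hx⟩ := ((Fintype.equivFin _).symm j : Set.range r).2
  have hrj : r (ofRange r j) = ofRange r j := by rw [ofRange, ← hx, hidem]
  apply (Fintype.equivFin (Set.range r)).symm.injective
  simpa [toRange, Set.rangeFactorization] using Subtype.ext hrj

theorem card_range_lt_of_ne_id {r : α → α} (hidem : ∀ x, r (r x) = r x) (hne : r ≠ id) :
    Fintype.card (Set.range r) < Fintype.card α := by
  obtain ⟨x, hx⟩ := Function.ne_iff.1 hne
  refine Fintype.card_subtype_lt (x := x) ?_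
  rintro ⟨y, rfl⟩
  exact hx (hidem y)

end Retractions

section Decomposition

variable {α β : Type*} [Fintype α] [LinearOrder α] [Fintype β] [DecidableEq β]

theorem card_filter_fiberMin_eq (P : (α → β) → Prop) [DecidablePred P] {r : α → α}
    (hr : r ∈ retractions α) :
    #{φ | P φ ∧ fiberMin φ = r} =
      #{ψ : Fin (Fintype.card (Set.range r)) → β | Injective ψ ∧ P (ψ ∘ toRange r)} := by
  obtain ⟨hidem, hle⟩ := mem_retractions.1 hr
  have hfactor : ∀ φ : α → β, fiberMin φ = r → (φ ∘ ofRange r) ∘ toRange r = φ := by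
    intro φ hφ
    funext x
    rw [comp_apply, comp_apply, ofRange_toRange, ← hφ, apply_fiberMin φ x]
  refine card_bij' (fun φ _ => φ ∘ ofRange r) (fun ψ _ => ψ ∘ toRange r) ?_ ?_ ?_ ?_
  · intro φ hφ
    simp only [mem_filter, mem_univ, true_and] at hφ ⊢
    refine ⟨fun i j hij => ?_, by rw [hfactor φ hφ.2]; exact hφ.1⟩
    have hr_eq := (fiberMin_eq_fiberMin_iff (φ := φ)).2 hij
    rw [hφ.2] at hr_eq
    simpa [toRange_ofRange hidem] using toRange_eq_toRange_iff.2 hr_eq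
  · intro ψ hψ
    simp only [mem_filter, mem_univ, true_and] at hψ ⊢
    refine ⟨hψ.2, fiberMin_eq_of_fibers_eq hidem hle fun x y => ?_⟩
    rw [comp_apply, comp_apply, hψ.1.eq_iff, toRange_eq_toRange_iff]
  · intro φ hφ
    exact hfactor φ (mem_filter.1 hφ).2.2
  · intro ψ _
    funext j
    rw [comp_apply, comp_apply, toRange_ofRange hidem]

/-- Every map is an injective map composed with the quotient map of its fibre partition,
and the partition is trivial exactly for injective maps. -/
theorem card_filter_eq_card_injective_add_sum (P : (α → β) → Prop) [DecidablePred P] :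
    #{φ | P φ} = #{φ | Injective φ ∧ P φ} + ∑ r ∈ (retractions α).erase id,
      #{ψ : Fin (Fintype.card (Set.range r)) → β | Injective ψ ∧ P (ψ ∘ toRange r)} := by
  have hid : id ∈ retractions α := mem_retractions.2 ⟨fun _ => rfl, le_refl⟩
  rw [card_eq_sum_card_fiberwise (f := fiberMin) (t := retractions α)
    fun φ _ => fiberMin_mem_retractions φ, ← add_sum_erase _ _ hid]
  congr 1
  · simp_rw [filter_filter, fiberMin_eq_id_iff, and_comm]
  · refine sum_congr rfl fun r hr => ?_
    rw [filter_filter, card_filter_fiberMin_eq P (mem_of_mem_erase hr)]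

end Decomposition

namespace KUniformHypergraph

variable {k p m n : ℕ}

def IsHom (F : KUniformHypergraph k p) (H : KUniformHypergraph k n) (φ : Fin p → Fin n) : Prop :=
  ∀ e ∈ F.edges, e.image φ ∈ H.edges

instance (F : KUniformHypergraph k p) (H : KUniformHypergraph k n) : DecidablePred (F.IsHom H) :=
  fun _ => inferInstanceAs (Decidable (∀ e ∈ F.edges, _))

def injCount (F : KUniformHypergraph k p) (H : KUniformHypergraph k n) : ℕ :=
  #{φ | Injective φ ∧ F.IsHom H φ}

def map (F : KUniformHypergraph k p) (q : Fin p → Fin m)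
    (hq : ∀ e ∈ F.edges, (e.image q).card = k) : KUniformHypergraph k m where
  edges := F.edges.image (image q)
  uniform := by simpa using hq

variable {F : KUniformHypergraph k p} {H : KUniformHypergraph k n}

theorem isHom_map_iff {q : Fin p → Fin m} {hq : ∀ e ∈ F.edges, (e.image q).card = k}
    {ψ : Fin m → Fin n} : (F.map q hq).IsHom H ψ ↔ F.IsHom H (ψ ∘ q) := by
  simp [IsHom, map, image_image]

theorem not_isHom_comp {q : Fin p → Fin m} {ψ : Fin m → Fin n} (hψ : Injective ψ)
    {e : Finset (Fin p)} (he : e ∈ F.edges) (hcard : (e.image q).card ≠ k) :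
    ¬ F.IsHom H (ψ ∘ q) := by
  intro h
  apply hcard
  rw [← card_image_of_injective _ hψ, image_image]
  exact H.uniform _ (h e he)

theorem IsHom.card_edges_le {φ : Fin p → Fin n} (hφ : F.IsHom H φ) (hinj : Injective φ) :
    #F.edges ≤ #H.edges :=
  card_le_card_of_injOn (image φ) hφ (image_injective hinj).injOn

theorem homCount_eq_injCount_add_sum (F : KUniformHypergraph k p) (H : KUniformHypergraph k n) :
    homCount F H = F.injCount H + ∑ r ∈ (retractions (Fin p)).erase id,
      #{ψ | Injective ψ ∧ F.IsHom H (ψ ∘ toRange r)} := by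
  rw [homCount, Nat.card_eq_fintype_card, Fintype.card_subtype, injCount]
  exact card_filter_eq_card_injective_add_sum (F.IsHom H)

theorem card_injective_isHom_comp_eq {H₁ H₂ : KUniformHypergraph k n}
    (hinj : ∀ F' : KUniformHypergraph k m, F'.injCount H₁ = F'.injCount H₂)
    (F : KUniformHypergraph k p) (q : Fin p → Fin m) :
    #{ψ | Injective ψ ∧ F.IsHom H₁ (ψ ∘ q)} = #{ψ | Injective ψ ∧ F.IsHom H₂ (ψ ∘ q)} := by
  by_cases hq : ∀ e ∈ F.edges, (e.image q).card = k
  · simpa only [injCount, isHom_map_iff] using hinj (F.map q hq)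
  · obtain ⟨e, he, hcard⟩ := not_forall₂.1 hq
    have hzero (H : KUniformHypergraph k n) : #{ψ | Injective ψ ∧ F.IsHom H (ψ ∘ q)} = 0 :=
      card_eq_zero.2 (filter_eq_empty_iff.2 fun _ _ h => not_isHom_comp h.1 he hcard h.2)
    rw [hzero, hzero]

theorem injCount_eq_of_homCount_eq {H₁ H₂ : KUniformHypergraph k n}
    (h : ∀ (p : ℕ) (F : KUniformHypergraph k p), homCount F H₁ = homCount F H₂) (p : ℕ)
    (F : KUniformHypergraph k p) : F.injCount H₁ = F.injCount H₂ := by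
  induction p using Nat.strong_induction_on with
  | _ p ih =>
  have hsum : ∑ r ∈ (retractions (Fin p)).erase id,
      #{ψ | Injective ψ ∧ F.IsHom H₁ (ψ ∘ toRange r)} =
      ∑ r ∈ (retractions (Fin p)).erase id,
      #{ψ | Injective ψ ∧ F.IsHom H₂ (ψ ∘ toRange r)} := by
    refine sum_congr rfl fun r hr => card_injective_isHom_comp_eq (ih _ ?_) F (toRange r)
    simpa using card_range_lt_of_ne_id (mem_retractions.1 (mem_of_mem_erase hr)).1
      (ne_of_mem_erase hr)
  have hhom := h p F
  rwa [homCount_eq_injCount_add_sum, homCount_eq_injCount_add_sum, hsum, add_left_inj] at hhom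

theorem injCount_self_pos (H : KUniformHypergraph k n) : 0 < H.injCount H :=
  card_pos.2 ⟨id, mem_filter.2 ⟨mem_univ _, injective_id, fun e he => by simpa using he⟩⟩

theorem exists_injective_isHom_of_injCount_pos (h : 0 < F.injCount H) :
    ∃ φ, Injective φ ∧ F.IsHom H φ := by
  obtain ⟨φ, hφ⟩ := card_pos.1 h
  exact ⟨φ, (mem_filter.1 hφ).2⟩

theorem homCount_eq_of_perm {H₁ H₂ : KUniformHypergraph k n} (σ : Equiv.Perm (Fin n))
    (hσ : H₁.edges.image (fun e => e.image σ) = H₂.edges) (F : KUniformHypergraph k p) :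
    homCount F H₁ = homCount F H₂ := by
  have hmem (s : Finset (Fin n)) : s.image σ ∈ H₂.edges ↔ s ∈ H₁.edges := by
    rw [← hσ, (image_injective σ.injective).mem_finset_image]
  refine Nat.card_congr (((Equiv.refl _).arrowCongr σ).subtypeEquiv fun φ => ?_)
  refine forall₂_congr fun e _ => ?_
  rw [← hmem, image_image]
  rfl

theorem exists_perm_of_isHom {H₁ H₂ : KUniformHypergraph k n} {φ ψ : Fin n → Fin n}
    (hφ : Injective φ) (hφH : H₁.IsHom H₂ φ) (hψ : Injective ψ) (hψH : H₂.IsHom H₁ ψ) :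
    ∃ σ : Equiv.Perm (Fin n), H₁.edges.image (fun e => e.image σ) = H₂.edges := by
  refine ⟨Equiv.ofBijective φ (Finite.injective_iff_bijective.1 hφ),
    eq_of_subset_of_card_le (image_subset_iff.2 hφH) ?_⟩
  rw [card_image_of_injective _ (image_injective (Equiv.ofBijective φ _).injective)]
  exact hψH.card_edges_le hψ

end KUniformHypergraph

open KUniformHypergraph in
theorem homomorphism_completeness_general (k n : ℕ)
    (H₁ H₂ : KUniformHypergraph k n) :
    (∃ σ : Equiv.Perm (Fin n), H₁.edges.image (fun e => e.image σ) = H₂.edges) ↔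
    (∀ (p : ℕ) (F : KUniformHypergraph k p), homCount F H₁ = homCount F H₂) := by
  refine ⟨fun ⟨σ, hσ⟩ _ F => homCount_eq_of_perm σ hσ F, fun h => ?_⟩
  have hinj := injCount_eq_of_homCount_eq h n
  obtain ⟨φ, hφ, hφH⟩ := exists_injective_isHom_of_injCount_pos (hinj H₁ ▸ injCount_self_pos H₁)
  obtain ⟨ψ, hψ, hψH⟩ :=
    exists_injective_isHom_of_injCount_pos ((hinj H₂).symm ▸ injCount_self_pos H₂)
  exact exists_perm_of_isHom hφ hφH hψ hψH

/-- **Homomorphism completeness**: two `k`-uniform hypergraphs on `[n]` are isomorphic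
iff they have the same homomorphism counts from every finite `k`-uniform hypergraph. -/
theorem homomorphism_completeness (k n : ℕ) (hk : 1 ≤ k) (hn : 1 ≤ n)
    (H₁ H₂ : KUniformHypergraph k n) :
    (∃ σ : Equiv.Perm (Fin n), H₁.edges.image (fun e => e.image σ) = H₂.edges) ↔
    (∀ (p : ℕ) (F : KUniformHypergraph k p), homCount F H₁ = homCount F H₂) :=
  homomorphism_completeness_general k n H₁ H₂
end

section
/- Let S be a Steiner triple system STS(v) with adjacency tensor A ∈ S^{3,v}. Then for every doubly stochastic v × v matrix D, ⟨A, D^{⊗3}·A⟩ ≤ v(v−1), and the identity matrix achieves ⟨A, A⟩ = v(v−1). Consequently the Sinkhorn relaxed self-alignment score satisfies Θ̂^{SK}_A(A) = max over D ∈ B_v of ⟨A, D^{⊗3}·A⟩ = v(v−1). -/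
/-- A doubly stochastic matrix: nonnegative entries, all row sums and column sums equal 1. -/
def IsDoublyStochastic {n : ℕ} (D : Fin n → Fin n → ℝ) : Prop :=
  (∀ i j, 0 ≤ D i j) ∧ (∀ i, ∑ j, D i j = 1) ∧ (∀ j, ∑ i, D i j = 1)

/-- `(D^{⊗k} · A)_{i₁,…,i_k} = ∑_{j₁,…,j_k} (∏_ℓ D_{i_ℓ j_ℓ}) · A_{j₁,…,j_k}`. -/
noncomputable def tensorApply {k n : ℕ} (D : Fin n → Fin n → ℝ)
    (A : (Fin k → Fin n) → ℝ) : (Fin k → Fin n) → ℝ :=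
  fun i => ∑ j : Fin k → Fin n, (∏ l, D (i l) (j l)) * A j

/-- Entrywise inner product of tensors: `⟨P, B⟩ = ∑_{i₁,…,i_k} P_i · B_i`. -/
noncomputable def tinner {k n : ℕ} (P B : (Fin k → Fin n) → ℝ) : ℝ :=
  ∑ i : Fin k → Fin n, P i * B i

/-- A Steiner triple system on `[v]`: a collection of 3-element subsets such that every
2-element subset is contained in exactly one triple. -/
def IsSTS (v : ℕ) (T : Finset (Finset (Fin v))) : Prop :=
  (∀ t ∈ T, t.card = 3) ∧
  ∀ x y : Fin v, x ≠ y → ∃! t : Finset (Fin v), t ∈ T ∧ x ∈ t ∧ y ∈ t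

open Classical in
/-- The 0–1 adjacency tensor of a triple system: `A_{ijk} = 1` iff `i,j,k` are distinct
and `{i,j,k}` is a triple. -/
noncomputable def stsAdj {v : ℕ} (T : Finset (Finset (Fin v))) : (Fin 3 → Fin v) → ℝ :=
  fun i => if Function.Injective i ∧ Finset.image i Finset.univ ∈ T then 1 else 0

section STSAux
open Finset

def stsS (v : ℕ) (T : Finset (Finset (Fin v))) : Finset (Fin 3 → Fin v) :=
  Finset.univ.filter (fun i => Function.Injective i ∧ Finset.image i Finset.univ ∈ T)

lemma mem_stsS {v : ℕ} {T : Finset (Finset (Fin v))} {i : Fin 3 → Fin v} :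
    i ∈ stsS v T ↔ Function.Injective i ∧ Finset.image i Finset.univ ∈ T := by
  simp [stsS]

lemma image_eq_triple {v : ℕ} (i : Fin 3 → Fin v) :
    Finset.image i Finset.univ = {i 0, i 1, i 2} := by
  have h : (Finset.univ : Finset (Fin 3)) = {0, 1, 2} := by decide
  rw [h]
  simp [Finset.image_insert]

lemma sts_ext {v : ℕ} {T : Finset (Finset (Fin v))} (hT : IsSTS v T)
    {i j : Fin 3 → Fin v} (hi : i ∈ stsS v T) (hj : j ∈ stsS v T)
    (h0 : i 0 = j 0) (h1 : i 1 = j 1) : i = j := by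
  rw [mem_stsS] at hi hj
  have hxy : i 0 ≠ i 1 := fun h => absurd (hi.1 h) (by decide)
  obtain ⟨t, -, huniq⟩ := hT.2 (i 0) (i 1) hxy
  have e1 : Finset.image i Finset.univ = t :=
    huniq _ ⟨hi.2, Finset.mem_image_of_mem i (Finset.mem_univ 0),
      Finset.mem_image_of_mem i (Finset.mem_univ 1)⟩
  have e2 : Finset.image j Finset.univ = t := by
    refine huniq _ ⟨hj.2, ?_, ?_⟩
    · rw [h0]; exact Finset.mem_image_of_mem j (Finset.mem_univ 0)
    · rw [h1]; exact Finset.mem_image_of_mem j (Finset.mem_univ 1)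
  have him : i 2 ∈ Finset.image j Finset.univ := by
    rw [e2, ← e1]; exact Finset.mem_image_of_mem i (Finset.mem_univ 2)
  rw [image_eq_triple j] at him
  have h2 : i 2 = j 2 := by
    simp only [Finset.mem_insert, Finset.mem_singleton] at him
    rcases him with h | h | h
    · exact absurd (hi.1 (h.trans h0.symm)) (by decide)
    · exact absurd (hi.1 (h.trans h1.symm)) (by decide)
    · exact h
  funext l
  fin_cases l <;> assumption

lemma exists_triple {v : ℕ} {T : Finset (Finset (Fin v))} (hT : IsSTS v T)
    {x y : Fin v} (hxy : x ≠ y) :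
    ∃ i : Fin 3 → Fin v, i ∈ stsS v T ∧ i 0 = x ∧ i 1 = y := by
  obtain ⟨t, ⟨htT, hx, hy⟩, -⟩ := hT.2 x y hxy
  have hcard := hT.1 t htT
  have hsub : ({x, y} : Finset (Fin v)) ⊆ t := by
    intro a ha; simp only [Finset.mem_insert, Finset.mem_singleton] at ha
    rcases ha with rfl | rfl <;> assumption
  have hc2 : ({x, y} : Finset (Fin v)).card = 2 := by
    rw [Finset.card_insert_of_notMem (by simpa using hxy), Finset.card_singleton]
  have h1 : (t \ {x, y}).card = 1 := by
    rw [Finset.card_sdiff_of_subset hsub, hcard, hc2]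
  obtain ⟨z, hz⟩ := Finset.card_eq_one.mp h1
  have hzmem : z ∈ t \ ({x, y} : Finset (Fin v)) := by
    rw [hz]; exact Finset.mem_singleton_self z
  rw [Finset.mem_sdiff] at hzmem
  have hzx : z ≠ x := fun h => hzmem.2 (by simp [h])
  have hzy : z ≠ y := fun h => hzmem.2 (by simp [h])
  have ht : t = {x, y, z} := by
    ext a
    simp only [Finset.mem_insert, Finset.mem_singleton]
    constructor
    · intro ha
      by_cases h : a = x ∨ a = y
      · tauto
      · push_neg at h
        have : a ∈ t \ ({x, y} : Finset (Fin v)) := by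
          rw [Finset.mem_sdiff]; simp [ha, h.1, h.2]
        rw [hz, Finset.mem_singleton] at this; tauto
    · rintro (rfl | rfl | rfl)
      · exact hx
      · exact hy
      · exact hzmem.1
  refine ⟨![x, y, z], mem_stsS.mpr ⟨?_, ?_⟩, rfl, rfl⟩
  · intro a b hab
    fin_cases a <;> fin_cases b <;> simp_all
  · rw [image_eq_triple]
    simpa using ht ▸ htT

lemma card_stsS {v : ℕ} {T : Finset (Finset (Fin v))} (hT : IsSTS v T) :
    (stsS v T).card = v * v - v := by
  classical
  have hbij : (stsS v T).card
      = (Finset.univ.filter (fun p : Fin v × Fin v => p.1 ≠ p.2)).card := by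
    apply Finset.card_bij (fun i _ => (i 0, i 1))
    · intro i hi
      simp only [Finset.mem_filter, Finset.mem_univ, true_and]
      exact fun h => absurd ((mem_stsS.mp hi).1 h) (by decide)
    · intro i hi j hj h
      exact sts_ext hT hi hj (congrArg Prod.fst h) (congrArg Prod.snd h)
    · intro p hp
      simp only [Finset.mem_filter, Finset.mem_univ, true_and] at hp
      obtain ⟨i, hi, h0, h1⟩ := exists_triple hT hp
      exact ⟨i, hi, by rw [h0, h1]⟩
  rw [hbij]
  have hdiag : (Finset.univ.filter (fun p : Fin v × Fin v => p.1 = p.2)).card = v := by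
    have he : (Finset.univ.filter (fun p : Fin v × Fin v => p.1 = p.2))
        = Finset.univ.image (fun x : Fin v => (x, x)) := by
      ext ⟨a, b⟩
      simp only [Finset.mem_filter, Finset.mem_univ, true_and, Finset.mem_image,
        Prod.mk.injEq]
      constructor
      · rintro rfl; exact ⟨a, rfl, rfl⟩
      · rintro ⟨c, rfl, rfl⟩; rfl
    rw [he, Finset.card_image_of_injective _ (fun a b h => (Prod.mk.injEq _ _ _ _).mp h |>.1)]
    simp
  have h2 := Finset.card_filter_add_card_filter_not
    (s := (Finset.univ : Finset (Fin v × Fin v))) (p := fun p => p.1 = p.2)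
  have huniv : (Finset.univ : Finset (Fin v × Fin v)).card = v * v := by simp
  have hne : (Finset.univ.filter (fun p : Fin v × Fin v => p.1 ≠ p.2))
      = (Finset.univ.filter (fun p : Fin v × Fin v => ¬ p.1 = p.2)) := rfl
  rw [hne]
  omega


-- entries ≤ 1
lemma entry_le_one {n : ℕ} {D : Fin n → Fin n → ℝ} (hD : IsDoublyStochastic D)
    (a b : Fin n) : D a b ≤ 1 := by
  have h := Finset.single_le_sum (f := D a) (fun c _ => hD.1 a c) (Finset.mem_univ b)
  rwa [hD.2.1 a] at h

lemma tinner_left {v : ℕ} (T : Finset (Finset (Fin v))) (B : (Fin 3 → Fin v) → ℝ) :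
    tinner (stsAdj T) B = ∑ i ∈ stsS v T, B i := by
  classical
  rw [tinner, stsS, Finset.sum_filter]
  refine Finset.sum_congr rfl fun i _ => ?_
  by_cases h : Function.Injective i ∧ Finset.image i Finset.univ ∈ T <;>
    simp [stsAdj, h]

lemma tensor_entry {v : ℕ} (T : Finset (Finset (Fin v))) (D : Fin v → Fin v → ℝ)
    (i : Fin 3 → Fin v) :
    tensorApply D (stsAdj T) i = ∑ j ∈ stsS v T, ∏ l, D (i l) (j l) := by
  classical
  rw [tensorApply, stsS, Finset.sum_filter]
  refine Finset.sum_congr rfl fun j _ => ?_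
  by_cases h : Function.Injective j ∧ Finset.image j Finset.univ ∈ T <;>
    simp [stsAdj, h]

lemma inner_bound {v : ℕ} {T : Finset (Finset (Fin v))} (hT : IsSTS v T)
    {D : Fin v → Fin v → ℝ} (hD : IsDoublyStochastic D) (i : Fin 3 → Fin v) :
    ∑ j ∈ stsS v T, (∏ l, D (i l) (j l)) ≤ 1 := by
  classical
  calc ∑ j ∈ stsS v T, (∏ l, D (i l) (j l))
      ≤ ∑ j ∈ stsS v T, D (i 0) (j 0) * D (i 1) (j 1) := by
        refine Finset.sum_le_sum fun j _ => ?_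
        rw [Fin.prod_univ_three]
        exact mul_le_of_le_one_right (mul_nonneg (hD.1 _ _) (hD.1 _ _))
          (entry_le_one hD (i 2) (j 2))
    _ = ∑ p ∈ (stsS v T).image (fun j => (j 0, j 1)), D (i 0) p.1 * D (i 1) p.2 := by
        rw [Finset.sum_image (fun a ha b hb hab =>
          sts_ext hT ha hb (congrArg Prod.fst hab) (congrArg Prod.snd hab))]
    _ ≤ ∑ p : Fin v × Fin v, D (i 0) p.1 * D (i 1) p.2 :=
        Finset.sum_le_sum_of_subset_of_nonneg (Finset.subset_univ _)
          (fun p _ _ => mul_nonneg (hD.1 _ _) (hD.1 _ _))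
    _ = 1 := by
        rw [Fintype.sum_prod_type]
        simp_rw [← Finset.mul_sum, hD.2.1, mul_one]
        exact hD.2.1 (i 0)

lemma tensor_id {k n : ℕ} (A : (Fin k → Fin n) → ℝ) :
    tensorApply (fun a b : Fin n => if a = b then (1 : ℝ) else 0) A = A := by
  classical
  funext i
  rw [tensorApply, Finset.sum_eq_single i]
  · simp
  · intro j _ hji
    have hex : ∃ l, i l ≠ j l := by
      by_contra h
      push_neg at h
      exact hji (funext fun l => (h l).symm)
    obtain ⟨l, hl⟩ := hex
    rw [Finset.prod_eq_zero (Finset.mem_univ l) (by simp [hl]), zero_mul]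
  · intro h; exact absurd (Finset.mem_univ i) h

lemma id_ds {n : ℕ} : IsDoublyStochastic (fun a b : Fin n => if a = b then (1 : ℝ) else 0) := by
  refine ⟨fun a b => ?_, fun a => ?_, fun b => ?_⟩
  · by_cases h : a = b <;> simp [h]
  · simp
  · simp

end STSAux

/-- **Sinkhorn self-alignment of a Steiner triple system**: for every doubly stochastic
`D`, `⟨A, D^{⊗3}·A⟩ ≤ v(v−1)`; the identity achieves `⟨A, A⟩ = v(v−1)`; hence the
relaxed self-alignment score `max_{D ∈ B_v} ⟨A, D^{⊗3}·A⟩` equals `v(v−1)`. -/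
theorem sts_self_alignment (v : ℕ) (T : Finset (Finset (Fin v))) (hT : IsSTS v T) :
    (∀ D : Fin v → Fin v → ℝ, IsDoublyStochastic D →
      tinner (stsAdj T) (tensorApply D (stsAdj T)) ≤ (v : ℝ) * ((v : ℝ) - 1)) ∧
    tinner (stsAdj T) (stsAdj T) = (v : ℝ) * ((v : ℝ) - 1) ∧
    sSup ((fun D : Fin v → Fin v → ℝ => tinner (stsAdj T) (tensorApply D (stsAdj T))) ''
        {D | IsDoublyStochastic D}) = (v : ℝ) * ((v : ℝ) - 1) := by
  classical
  have hvle : v ≤ v * v := by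
    rcases Nat.eq_zero_or_pos v with rfl | h
    · simp
    · exact Nat.le_mul_of_pos_left v h
  have hcard : ((stsS v T).card : ℝ) = (v : ℝ) * ((v : ℝ) - 1) := by
    rw [card_stsS hT, Nat.cast_sub hvle]
    push_cast
    ring
  have hub : ∀ D : Fin v → Fin v → ℝ, IsDoublyStochastic D →
      tinner (stsAdj T) (tensorApply D (stsAdj T)) ≤ (v : ℝ) * ((v : ℝ) - 1) := by
    intro D hD
    rw [tinner_left]
    calc ∑ i ∈ stsS v T, tensorApply D (stsAdj T) i
        = ∑ i ∈ stsS v T, ∑ j ∈ stsS v T, ∏ l, D (i l) (j l) :=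
          Finset.sum_congr rfl fun i _ => tensor_entry T D i
      _ ≤ ∑ _i ∈ stsS v T, (1 : ℝ) :=
          Finset.sum_le_sum fun i _ => inner_bound hT hD i
      _ = ((stsS v T).card : ℝ) := by simp
      _ = (v : ℝ) * ((v : ℝ) - 1) := hcard
  have hdiag : tinner (stsAdj T) (stsAdj T) = (v : ℝ) * ((v : ℝ) - 1) := by
    rw [tinner_left]
    have h1 : ∀ i ∈ stsS v T, stsAdj T i = 1 := by
      intro i hi
      rw [mem_stsS] at hi
      simp [stsAdj, hi]
    rw [Finset.sum_congr rfl h1]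
    simpa using hcard
  refine ⟨hub, hdiag, ?_⟩
  have hId := id_ds (n := v)
  have hval : tinner (stsAdj T)
      (tensorApply (fun a b : Fin v => if a = b then (1 : ℝ) else 0) (stsAdj T))
      = (v : ℝ) * ((v : ℝ) - 1) := by
    rw [tensor_id, hdiag]
  apply le_antisymm
  · apply csSup_le
    · exact ⟨_, ⟨_, hId, rfl⟩⟩
    · rintro x ⟨D, hD, rfl⟩
      exact hub D hD
  · apply le_csSup
    · refine ⟨(v : ℝ) * ((v : ℝ) - 1), ?_⟩
      rintro x ⟨D, hD, rfl⟩
      exact hub D hD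
    · exact ⟨_, hId, hval⟩
end

section
/- Let S₁ and S₂ be two Steiner triple systems STS(v) on [v] with adjacency tensors A₁, A₂ ∈ S^{3,v}, and suppose there exists a doubly stochastic v × v matrix D with ⟨A₁, D^{⊗3}·A₂⟩ = v(v−1). Then D is a permutation matrix, and its permutation σ : [v] → [v] is an isomorphism between the two systems: {i,j,k} is a triple of S₁ if and only if {σ(i), σ(j), σ(k)} is a triple of S₂. -/
section RigidityAux
open Finset

lemma image_vec3 {α : Type*} [DecidableEq α] (x y z : α) :
    Finset.image ![x, y, z] Finset.univ = {x, y, z} := by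
  have h : (Finset.univ : Finset (Fin 3)) = {0, 1, 2} := by decide
  rw [h]
  simp

lemma inj_vec3 {α : Type*} {x y z : α} (hxy : x ≠ y) (hxz : x ≠ z) (hyz : y ≠ z) :
    Function.Injective ![x, y, z] := by
  intro a b hab
  fin_cases a <;> fin_cases b <;> simp_all

lemma vec3_distinct {α : Type*} {x y z : α} (h : Function.Injective ![x, y, z]) :
    x ≠ y ∧ x ≠ z ∧ y ≠ z := by
  refine ⟨?_, ?_, ?_⟩
  · intro he
    have : (0 : Fin 3) = 1 := h (by simp [he])
    exact absurd this (by decide)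
  · intro he
    have : (0 : Fin 3) = 2 := h (by simp [he])
    exact absurd this (by decide)
  · intro he
    have : (1 : Fin 3) = 2 := h (by simp [he])
    exact absurd this (by decide)

lemma eq_triple {α : Type*} [DecidableEq α] {t : Finset α} {a b c : α}
    (h3 : t.card = 3) (ha : a ∈ t) (hb : b ∈ t) (hc : c ∈ t)
    (hab : a ≠ b) (hac : a ≠ c) (hbc : b ≠ c) : t = {a, b, c} := by
  have hcard : ({a, b, c} : Finset α).card = 3 :=
    Finset.card_eq_three.mpr ⟨a, b, c, hab, hac, hbc, rfl⟩
  refine (Finset.eq_of_subset_of_card_le ?_ ?_).symm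
  · intro x hx
    simp only [Finset.mem_insert, Finset.mem_singleton] at hx
    rcases hx with rfl | rfl | rfl <;> assumption
  · rw [h3, hcard]

lemma distinct_of_card3 {α : Type*} [DecidableEq α] {i j k : α}
    (h : ({i, j, k} : Finset α).card = 3) : i ≠ j ∧ i ≠ k ∧ j ≠ k := by
  refine ⟨?_, ?_, ?_⟩
  · rintro rfl
    have h2 : ({i, i, k} : Finset α) = {i, k} := by ext x; simp
    rw [h2] at h
    have := Finset.card_insert_le i ({k} : Finset α)
    simp at this; omega
  · rintro rfl
    have h2 : ({i, j, i} : Finset α) = {i, j} := by ext x; simp; tauto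
    rw [h2] at h
    have := Finset.card_insert_le i ({j} : Finset α)
    simp at this; omega
  · rintro rfl
    have h2 : ({i, j, j} : Finset α) = {i, j} := by ext x; simp
    rw [h2] at h
    have := Finset.card_insert_le i ({j} : Finset α)
    simp at this; omega

lemma stsAdj_nonneg {v : ℕ} (T : Finset (Finset (Fin v))) (i : Fin 3 → Fin v) :
    0 ≤ stsAdj T i := by
  unfold stsAdj; split <;> norm_num

lemma stsAdj_le_one {v : ℕ} (T : Finset (Finset (Fin v))) (i : Fin 3 → Fin v) :
    stsAdj T i ≤ 1 := by
  unfold stsAdj; split <;> norm_num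

lemma stsAdj_eq_one_iff {v : ℕ} (T : Finset (Finset (Fin v))) (i : Fin 3 → Fin v) :
    stsAdj T i = 1 ↔ Function.Injective i ∧ Finset.image i Finset.univ ∈ T := by
  unfold stsAdj; split <;> simp_all

lemma sts_third {v : ℕ} {T : Finset (Finset (Fin v))} (h : IsSTS v T) {x y : Fin v}
    (hxy : x ≠ y) :
    ∃ z, x ≠ z ∧ y ≠ z ∧ ({x, y, z} : Finset (Fin v)) ∈ T ∧
      ∀ t ∈ T, x ∈ t → y ∈ t → t = {x, y, z} := by
  obtain ⟨t, ⟨ht, hx, hy⟩, hu⟩ := h.2 x y hxy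
  have h3 : t.card = 3 := h.1 t ht
  have hsub : ({x, y} : Finset (Fin v)) ⊆ t := by
    intro w hw
    simp only [Finset.mem_insert, Finset.mem_singleton] at hw
    rcases hw with rfl | rfl <;> assumption
  have hcard2 : ({x, y} : Finset (Fin v)).card = 2 := Finset.card_pair hxy
  have hd : (t \ {x, y}).card = 1 := by
    rw [Finset.card_sdiff_of_subset hsub, h3, hcard2]
  obtain ⟨z, hz⟩ := Finset.card_eq_one.mp hd
  have hzt : z ∈ t \ ({x, y} : Finset (Fin v)) := hz ▸ Finset.mem_singleton_self z
  rw [Finset.mem_sdiff] at hzt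
  obtain ⟨hzt, hz2⟩ := hzt
  simp only [Finset.mem_insert, Finset.mem_singleton, not_or] at hz2
  have hxz : x ≠ z := fun h' => hz2.1 h'.symm
  have hyz : y ≠ z := fun h' => hz2.2 h'.symm
  have heq : t = {x, y, z} := eq_triple h3 hx hy hzt hxy hxz hyz
  refine ⟨z, hxz, hyz, heq ▸ ht, ?_⟩
  intro t' ht' hx' hy'
  rw [← heq]
  exact hu t' ⟨ht', hx', hy'⟩

lemma weight_sum {v : ℕ} (D : Fin v → Fin v → ℝ) (hrow : ∀ i, ∑ j, D i j = 1)
    (i : Fin 3 → Fin v) :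
    ∑ j : Fin 3 → Fin v, ∏ l, D (i l) (j l) = 1 := by
  rw [← Fintype.piFinset_univ, ← Finset.prod_univ_sum]
  simp [hrow]

lemma sum_stsAdj {v : ℕ} {T : Finset (Finset (Fin v))} (h : IsSTS v T) :
    ∑ i : Fin 3 → Fin v, stsAdj T i = (v : ℝ) * ((v : ℝ) - 1) := by
  classical
  unfold stsAdj
  rw [Finset.sum_boole]
  have hcard : (Finset.univ.filter (fun i : Fin 3 → Fin v =>
      Function.Injective i ∧ Finset.image i Finset.univ ∈ T)).card
      = (Finset.univ : Finset (Fin v)).offDiag.card := by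
    apply Finset.card_bij (fun i _ => (i 0, i 1))
    · intro a ha
      simp only [Finset.mem_filter] at ha
      simp only [Finset.mem_offDiag]
      exact ⟨Finset.mem_univ _, Finset.mem_univ _,
        fun he => (by decide : (0 : Fin 3) ≠ 1) (ha.2.1 he)⟩
    · intro a ha b hb hab
      simp only [Finset.mem_filter] at ha hb
      obtain ⟨-, hai, haT⟩ := ha
      obtain ⟨-, hbi, hbT⟩ := hb
      have h0 : a 0 = b 0 := congrArg Prod.fst hab
      have h1 : a 1 = b 1 := congrArg Prod.snd hab
      have hne : a 0 ≠ a 1 := fun he => (by decide : (0 : Fin 3) ≠ 1) (hai he)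
      obtain ⟨z, hz1, hz2, hzm, hu⟩ := sts_third h hne
      have hmem0a : a 0 ∈ Finset.image a Finset.univ := Finset.mem_image_of_mem a (Finset.mem_univ _)
      have hmem1a : a 1 ∈ Finset.image a Finset.univ := Finset.mem_image_of_mem a (Finset.mem_univ _)
      have hea : Finset.image a Finset.univ = {a 0, a 1, z} := hu _ haT hmem0a hmem1a
      have heb : Finset.image b Finset.univ = {a 0, a 1, z} := by
        apply hu _ hbT
        · rw [h0]; exact Finset.mem_image_of_mem b (Finset.mem_univ _)
        · rw [h1]; exact Finset.mem_image_of_mem b (Finset.mem_univ _)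
      have ha2 : a 2 = z := by
        have hm : a 2 ∈ ({a 0, a 1, z} : Finset (Fin v)) := by
          rw [← hea]; exact Finset.mem_image_of_mem a (Finset.mem_univ _)
        simp only [Finset.mem_insert, Finset.mem_singleton] at hm
        rcases hm with hm | hm | hm
        · exact absurd (hai hm) (by decide)
        · exact absurd (hai hm) (by decide)
        · exact hm
      have hb2 : b 2 = z := by
        have hm : b 2 ∈ ({a 0, a 1, z} : Finset (Fin v)) := by
          rw [← heb]; exact Finset.mem_image_of_mem b (Finset.mem_univ _)
        simp only [Finset.mem_insert, Finset.mem_singleton] at hm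
        rcases hm with hm | hm | hm
        · rw [h0] at hm; exact absurd (hbi hm) (by decide)
        · rw [h1] at hm; exact absurd (hbi hm) (by decide)
        · exact hm
      funext l
      fin_cases l
      · exact h0
      · exact h1
      · rw [show ((⟨2, by omega⟩ : Fin 3)) = (2 : Fin 3) from rfl, ha2, hb2]
    · intro p hp
      simp only [Finset.mem_offDiag] at hp
      obtain ⟨-, -, hpne⟩ := hp
      obtain ⟨z, hz1, hz2, hzm, -⟩ := sts_third h hpne
      refine ⟨![p.1, p.2, z], ?_, ?_⟩
      · simp only [Finset.mem_filter]
        refine ⟨Finset.mem_univ _, inj_vec3 hpne hz1 hz2, ?_⟩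
        rw [image_vec3]; exact hzm
      · simp
  rw [hcard, Finset.offDiag_card]
  simp only [Finset.card_univ, Fintype.card_fin]
  have hle : v ≤ v * v := by nlinarith
  rw [Nat.cast_sub hle]
  push_cast
  ring

lemma key_cond {v : ℕ} {T₁ T₂ : Finset (Finset (Fin v))} (h₁ : IsSTS v T₁)
    {D : Fin v → Fin v → ℝ} (hD : IsDoublyStochastic D)
    (hmax : tinner (stsAdj T₁) (tensorApply D (stsAdj T₂)) = (v : ℝ) * ((v : ℝ) - 1)) :
    ∀ i : Fin 3 → Fin v, stsAdj T₁ i = 1 → ∀ j : Fin 3 → Fin v,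
      (∏ l, D (i l) (j l)) ≠ 0 → stsAdj T₂ j = 1 := by
  obtain ⟨hnn, hrow, hcol⟩ := hD
  have hwnn : ∀ i j : Fin 3 → Fin v, 0 ≤ ∏ l, D (i l) (j l) :=
    fun i j => Finset.prod_nonneg fun l _ => hnn _ _
  have hwsum := weight_sum D hrow
  have hgle : ∀ i : Fin 3 → Fin v,
      (∑ j : Fin 3 → Fin v, (∏ l, D (i l) (j l)) * stsAdj T₂ j) ≤ 1 := by
    intro i
    calc (∑ j : Fin 3 → Fin v, (∏ l, D (i l) (j l)) * stsAdj T₂ j)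
        ≤ ∑ j : Fin 3 → Fin v, (∏ l, D (i l) (j l)) * 1 :=
          Finset.sum_le_sum fun j _ => mul_le_mul_of_nonneg_left (stsAdj_le_one _ _) (hwnn i j)
      _ = 1 := by simpa using hwsum i
  have hzero : ∑ i : Fin 3 → Fin v,
      stsAdj T₁ i * (1 - ∑ j : Fin 3 → Fin v, (∏ l, D (i l) (j l)) * stsAdj T₂ j) = 0 := by
    have h1 : ∑ i : Fin 3 → Fin v,
        stsAdj T₁ i * (∑ j : Fin 3 → Fin v, (∏ l, D (i l) (j l)) * stsAdj T₂ j)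
        = (v : ℝ) * ((v : ℝ) - 1) := by
      simpa only [tinner, tensorApply] using hmax
    have h2 := sum_stsAdj h₁
    simp only [mul_sub, mul_one, Finset.sum_sub_distrib]
    rw [h1, h2, sub_self]
  have hterm := (Finset.sum_eq_zero_iff_of_nonneg (fun i _ =>
      mul_nonneg (stsAdj_nonneg T₁ i) (by linarith [hgle i]))).mp hzero
  intro i hi j hj
  have hgi := hterm i (Finset.mem_univ i)
  rw [hi, one_mul, sub_eq_zero] at hgi
  have hzero2 : ∑ j : Fin 3 → Fin v, (∏ l, D (i l) (j l)) * (1 - stsAdj T₂ j) = 0 := by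
    simp only [mul_sub, mul_one, Finset.sum_sub_distrib]
    rw [hwsum i, ← hgi, sub_self]
  have hterm2 := (Finset.sum_eq_zero_iff_of_nonneg (fun j _ =>
      mul_nonneg (hwnn i j) (by linarith [stsAdj_le_one T₂ j]))).mp hzero2
  have h := hterm2 j (Finset.mem_univ j)
  rcases mul_eq_zero.mp h with h' | h'
  · exact absurd h' hj
  · linarith [h']

end RigidityAux

/-- **Rigidity of Sinkhorn alignment on Steiner pairs**: if a doubly stochastic `D`
achieves the maximal alignment `⟨A₁, D^{⊗3}·A₂⟩ = v(v−1)` between two Steiner triple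
systems, then `D` is a permutation matrix and its permutation is an isomorphism of the
two systems. -/
theorem sts_alignment_rigidity (v : ℕ) (T₁ T₂ : Finset (Finset (Fin v)))
    (h₁ : IsSTS v T₁) (h₂ : IsSTS v T₂)
    (D : Fin v → Fin v → ℝ) (hD : IsDoublyStochastic D)
    (hmax : tinner (stsAdj T₁) (tensorApply D (stsAdj T₂)) = (v : ℝ) * ((v : ℝ) - 1)) :
    ∃ σ : Equiv.Perm (Fin v),
      (∀ i j : Fin v, D i j = if j = σ i then (1 : ℝ) else 0) ∧
      ∀ i j k : Fin v,
        ({i, j, k} : Finset (Fin v)) ∈ T₁ ↔ ({σ i, σ j, σ k} : Finset (Fin v)) ∈ T₂ := by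
  classical
  rcases Nat.lt_or_ge v 2 with hv | hv
  · interval_cases v
    · exact ⟨Equiv.refl _, fun i => i.elim0, fun i => i.elim0⟩
    · refine ⟨Equiv.refl _, ?_, ?_⟩
      · intro i j
        have hji : j = i := Subsingleton.elim _ _
        have h0 : i = 0 := Subsingleton.elim _ _
        subst hji h0
        have hone := hD.2.1 0
        rw [Fin.sum_univ_one] at hone
        simp [hone]
      · intro i j k
        simp only [Equiv.refl_apply]
        have hc : ({i, j, k} : Finset (Fin 1)).card ≤ 1 :=
          le_trans (Finset.card_le_univ _) (by simp)
        constructor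
        · intro hm; have h3 := h₁.1 _ hm; rw [h3] at hc; norm_num at hc
        · intro hm; have h3 := h₂.1 _ hm; rw [h3] at hc; norm_num at hc
  · have key := key_cond h₁ hD hmax
    obtain ⟨hnn, hrow, hcol⟩ := hD
    have hex : ∀ i : Fin v, ∃ j, D i j ≠ 0 := by
      intro i
      by_contra hcon
      push_neg at hcon
      have h' := hrow i
      rw [Finset.sum_eq_zero (fun j _ => hcon j)] at h'
      norm_num at h'
    haveI : Nontrivial (Fin v) := Fin.nontrivial_iff_two_le.mpr hv
    have tri : ∀ i : Fin v, ∃ x y : Fin v,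
        i ≠ x ∧ i ≠ y ∧ x ≠ y ∧ ({i, x, y} : Finset (Fin v)) ∈ T₁ := by
      intro i
      obtain ⟨x, hx⟩ := exists_ne i
      obtain ⟨z, hz1, hz2, hm, -⟩ := sts_third h₁ (Ne.symm hx)
      exact ⟨x, z, Ne.symm hx, hz1, hz2, hm⟩
    have huniq : ∀ i j j' : Fin v, D i j ≠ 0 → D i j' ≠ 0 → j = j' := by
      intro i j j' hj hj'
      obtain ⟨x, y, hix, hiy, hxy, hm⟩ := tri i
      obtain ⟨c, hc⟩ := hex x
      obtain ⟨e, he⟩ := hex y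
      have hA1 : stsAdj T₁ ![i, x, y] = 1 := by
        rw [stsAdj_eq_one_iff]
        exact ⟨inj_vec3 hix hiy hxy, by rw [image_vec3]; exact hm⟩
      have hprod : ∀ a : Fin v, D i a ≠ 0 →
          (∏ l, D (![i, x, y] l) (![a, c, e] l)) ≠ 0 := by
        intro a ha
        rw [Fin.prod_univ_three]
        simp only [Matrix.cons_val_zero, Matrix.cons_val_one, Matrix.head_cons,
          Matrix.cons_val_two, Matrix.tail_cons]
        exact mul_ne_zero (mul_ne_zero ha hc) he
      have hA2 := key _ hA1 _ (hprod j hj)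
      have hA2' := key _ hA1 _ (hprod j' hj')
      rw [stsAdj_eq_one_iff, image_vec3] at hA2 hA2'
      obtain ⟨hinj, hmem⟩ := hA2
      obtain ⟨hinj', hmem'⟩ := hA2'
      obtain ⟨hjc, hje, hce⟩ := vec3_distinct hinj
      obtain ⟨hjc', hje', -⟩ := vec3_distinct hinj'
      obtain ⟨w, -, -, -, hu⟩ := sts_third h₂ hce
      have e1 : ({j, c, e} : Finset (Fin v)) = {c, e, w} := hu _ hmem (by simp) (by simp)
      have e2 : ({j', c, e} : Finset (Fin v)) = {c, e, w} := hu _ hmem' (by simp) (by simp)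
      have hjw : j = w := by
        have : j ∈ ({c, e, w} : Finset (Fin v)) := e1 ▸ (by simp)
        simp only [Finset.mem_insert, Finset.mem_singleton] at this
        rcases this with h' | h' | h'
        · exact absurd h' hjc
        · exact absurd h' hje
        · exact h'
      have hjw' : j' = w := by
        have : j' ∈ ({c, e, w} : Finset (Fin v)) := e2 ▸ (by simp)
        simp only [Finset.mem_insert, Finset.mem_singleton] at this
        rcases this with h' | h' | h'
        · exact absurd h' hjc'
        · exact absurd h' hje'
        · exact h'
      rw [hjw, hjw']
    choose f hf using hex
    have hD1 : ∀ i, D i (f i) = 1 := by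
      intro i
      have h' := hrow i
      rwa [Finset.sum_eq_single (f i)
        (fun j _ hj => by by_contra hz; exact hj (huniq i j (f i) hz (hf i)))
        (fun h'' => absurd (Finset.mem_univ _) h'')] at h'
    have hDval : ∀ i j, D i j = if j = f i then (1 : ℝ) else 0 := by
      intro i j
      by_cases h' : j = f i
      · rw [if_pos h', h']; exact hD1 i
      · rw [if_neg h']
        by_contra hz
        exact h' (huniq i j (f i) hz (hf i))
    have hfinj : Function.Injective f := by
      intro a b hab
      by_contra hne
      have hba : D b (f a) = 1 := by rw [hab]; exact hD1 b
      have h2 : (2 : ℝ) ≤ ∑ r, D r (f a) := by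
        calc (2 : ℝ) = D a (f a) + D b (f a) := by rw [hD1 a, hba]; norm_num
          _ = ∑ r ∈ ({a, b} : Finset (Fin v)), D r (f a) := (Finset.sum_pair (f := fun r => D r (f a)) hne).symm
          _ ≤ ∑ r, D r (f a) := Finset.sum_le_sum_of_subset_of_nonneg
              (Finset.subset_univ _) (fun r _ _ => hnn r _)
      have := hcol (f a)
      linarith
    have fwd : ∀ i j k : Fin v, ({i, j, k} : Finset (Fin v)) ∈ T₁ →
        ({f i, f j, f k} : Finset (Fin v)) ∈ T₂ := by
      intro i j k hm
      obtain ⟨hij, hik, hjk⟩ := distinct_of_card3 (h₁.1 _ hm)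
      have hA1 : stsAdj T₁ ![i, j, k] = 1 := by
        rw [stsAdj_eq_one_iff]
        exact ⟨inj_vec3 hij hik hjk, by rw [image_vec3]; exact hm⟩
      have hprod : (∏ l, D (![i, j, k] l) (![f i, f j, f k] l)) ≠ 0 := by
        rw [Fin.prod_univ_three]
        simp only [Matrix.cons_val_zero, Matrix.cons_val_one, Matrix.head_cons,
          Matrix.cons_val_two, Matrix.tail_cons]
        rw [hD1, hD1, hD1]; norm_num
      have hA2 := key _ hA1 _ hprod
      rw [stsAdj_eq_one_iff, image_vec3] at hA2
      exact hA2.2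
    have bwd : ∀ i j k : Fin v, ({f i, f j, f k} : Finset (Fin v)) ∈ T₂ →
        ({i, j, k} : Finset (Fin v)) ∈ T₁ := by
      intro i j k hm
      obtain ⟨hij', hik', hjk'⟩ := distinct_of_card3 (h₂.1 _ hm)
      have hij : i ≠ j := fun h' => hij' (by rw [h'])
      obtain ⟨m, him, hjm, hmT, -⟩ := sts_third h₁ hij
      have hfm := fwd i j m hmT
      obtain ⟨w, -, -, -, hu2⟩ := sts_third h₂ hij'
      have e1 : ({f i, f j, f k} : Finset (Fin v)) = {f i, f j, w} :=
        hu2 _ hm (by simp) (by simp)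
      have e2 : ({f i, f j, f m} : Finset (Fin v)) = {f i, f j, w} :=
        hu2 _ hfm (by simp) (by simp)
      have hkw : f k = w := by
        have : f k ∈ ({f i, f j, w} : Finset (Fin v)) := e1 ▸ (by simp)
        simp only [Finset.mem_insert, Finset.mem_singleton] at this
        rcases this with h' | h' | h'
        · exact absurd h'.symm hik'
        · exact absurd h'.symm hjk'
        · exact h'
      have hmw : f m = w := by
        have : f m ∈ ({f i, f j, w} : Finset (Fin v)) := e2 ▸ (by simp)
        simp only [Finset.mem_insert, Finset.mem_singleton] at this
        rcases this with h' | h' | h'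
        · exact absurd (hfinj h'.symm) him
        · exact absurd (hfinj h'.symm) hjm
        · exact h'
      have : k = m := hfinj (hkw.trans hmw.symm)
      rw [this]
      exact hmT
    refine ⟨Equiv.ofBijective f (Finite.injective_iff_bijective.mp hfinj), ?_, ?_⟩
    · intro i j
      simpa only [Equiv.ofBijective_apply] using hDval i j
    · intro i j k
      simp only [Equiv.ofBijective_apply]
      exact ⟨fwd i j k, bwd i j k⟩
end

section
/- The triple system H₁ contains exactly 13 Pasch configurations and the triple system H₂ contains exactly 8 Pasch configurations. Consequently H₁ and H₂ are not isomorphic: no bijection of ℤ₁₃ carries the set of triples of H₁ onto the set of triples of H₂. -/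
/-- The cyclic Steiner triple system on `ℤ₁₃`, with triples `{i, i+1, i+4}` and
`{i, i+2, i+7}` for `i ∈ ℤ₁₃` (arithmetic mod 13). -/
def H₁ : Finset (Finset (Fin 13)) :=
  (Finset.univ.image fun i : Fin 13 => ({i, i + 1, i + 4} : Finset (Fin 13))) ∪
  (Finset.univ.image fun i : Fin 13 => ({i, i + 2, i + 7} : Finset (Fin 13)))

/-- The four triples removed from `H₁` in the Pasch trade. -/
def removedTriples : Finset (Finset (Fin 13)) :=
  {({3, 4, 7} : Finset (Fin 13)), {3, 5, 10}, {4, 10, 12}, {5, 7, 12}}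

/-- The four replacement triples of the Pasch trade. -/
def addedTriples : Finset (Finset (Fin 13)) :=
  {({3, 4, 10} : Finset (Fin 13)), {3, 5, 7}, {4, 7, 12}, {5, 10, 12}}

/-- The triple system obtained from `H₁` by the Pasch trade. -/
def H₂ : Finset (Finset (Fin 13)) := (H₁ \ removedTriples) ∪ addedTriples

/-- A Pasch configuration: four triples on six distinct points of the form
`{a,b,c}, {a,d,e}, {b,d,f}, {c,e,f}`. -/
def IsPasch (Q : Finset (Finset (Fin 13))) : Prop :=
  ∃ a b c d e f : Fin 13,
    ([a, b, c, d, e, f] : List (Fin 13)).Nodup ∧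
    Q = {({a, b, c} : Finset (Fin 13)), {a, d, e}, {b, d, f}, {c, e, f}}

/-- The number of Pasch configurations contained in a triple system. -/
noncomputable def paschCount (T : Finset (Finset (Fin 13))) : ℕ :=
  Nat.card {Q : Finset (Finset (Fin 13)) // Q ⊆ T ∧ IsPasch Q}


/-!
In a Steiner triple system, a Pasch configuration `{a,b,c}, {a,d,e}, {b,d,f}, {c,e,f}` is
determined by the "seed" `(a, b, d)`: writing `x ∘ y` for the third point of the block through
`x` and `y`, it consists of the blocks through `ab`, `ad`, `bd` and `(a ∘ b)(a ∘ d)`, and the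
seed is admissible exactly when the six points are distinct and `(a ∘ b) ∘ (a ∘ d) = b ∘ d`.
For `H₁` and `H₂` the operation `∘` is given by an explicit formula, so the Pasch
configurations are found by checking all `13³` seeds. Pasch configurations are carried to
Pasch configurations by any bijection of the points, so isomorphic systems have equal counts,
and `13 ≠ 8` separates `H₁` from `H₂`.
-/

open Finset Function

/-- For a set `T` of triples, such a `t` exists exactly when every pair of points lies in a unique
triple of `T`, and `t` is then the Steiner quasigroup of `T` off the diagonal. -/
structure IsThirdPoint {α : Type*} [DecidableEq α] (T : Finset (Finset α)) (t : α → α → α) :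
    Prop where
  third_ne_left : ∀ x y, x ≠ y → t x y ≠ x
  third_ne_right : ∀ x y, x ≠ y → t x y ≠ y
  triple_mem : ∀ x y, x ≠ y → {x, y, t x y} ∈ T
  third_mem : ∀ B ∈ T, ∀ x ∈ B, ∀ y ∈ B, x ≠ y → t x y ∈ B

theorem IsThirdPoint.eq_third {α : Type*} [DecidableEq α] {T : Finset (Finset α)}
    {t : α → α → α} (h : IsThirdPoint T t) {x y z : α} (hxy : x ≠ y) (hB : {x, y, z} ∈ T) :
    z = t x y := by
  have hmem := h.third_mem _ hB x (by simp) y (by simp) hxy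
  simp only [mem_insert, mem_singleton] at hmem
  rcases hmem with hx | hy | hz
  · exact absurd hx (h.third_ne_left x y hxy)
  · exact absurd hy (h.third_ne_right x y hxy)
  · exact hz.symm

section PaschSeeds

variable {T : Finset (Finset (Fin 13))} {t : Fin 13 → Fin 13 → Fin 13}

def paschOf (t : Fin 13 → Fin 13 → Fin 13) : Fin 13 × Fin 13 × Fin 13 → Finset (Finset (Fin 13))
  | (a, b, d) => {{a, b, t a b}, {a, d, t a d}, {b, d, t b d}, {t a b, t a d, t b d}}

def IsPaschSeed (t : Fin 13 → Fin 13 → Fin 13) : Fin 13 × Fin 13 × Fin 13 → Prop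
  | (a, b, d) => [a, b, t a b, d, t a d, t b d].Nodup ∧ t (t a b) (t a d) = t b d

instance (t : Fin 13 → Fin 13 → Fin 13) : DecidablePred (IsPaschSeed t)
  | (a, b, d) => inferInstanceAs
      (Decidable ([a, b, t a b, d, t a d, t b d].Nodup ∧ t (t a b) (t a d) = t b d))

theorem isPasch_paschOf {p : Fin 13 × Fin 13 × Fin 13} (hp : IsPaschSeed t p) :
    IsPasch (paschOf t p) :=
  let (a, b, d) := p
  ⟨a, b, t a b, d, t a d, t b d, hp.1, rfl⟩

theorem IsThirdPoint.paschOf_subset (h : IsThirdPoint T t) {p : Fin 13 × Fin 13 × Fin 13}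
    (hp : IsPaschSeed t p) : paschOf t p ⊆ T := by
  obtain ⟨a, b, d⟩ := p
  obtain ⟨hnodup, hclosed⟩ := hp
  simp only [List.nodup_cons, List.mem_cons, List.not_mem_nil, or_false, not_or] at hnodup
  obtain ⟨⟨hab, hac, had, -, -⟩, ⟨-, hbd, -, -⟩, ⟨-, hce, -⟩, -⟩ := hnodup
  intro B hB
  simp only [paschOf, mem_insert, mem_singleton] at hB
  rcases hB with rfl | rfl | rfl | rfl
  · exact h.triple_mem a b hab
  · exact h.triple_mem a d had
  · exact h.triple_mem b d hbd
  · exact hclosed ▸ h.triple_mem _ _ hce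

theorem IsThirdPoint.exists_paschSeed (h : IsThirdPoint T t) {Q : Finset (Finset (Fin 13))}
    (hQT : Q ⊆ T) (hQ : IsPasch Q) : ∃ p, IsPaschSeed t p ∧ Q = paschOf t p := by
  obtain ⟨a, b, c, d, e, f, hnodup, rfl⟩ := hQ
  have hdistinct := hnodup
  simp only [List.nodup_cons, List.mem_cons, List.not_mem_nil, or_false, not_or] at hdistinct
  obtain ⟨⟨hab, -, had, -, -⟩, ⟨-, hbd, -, -⟩, ⟨-, hce, -⟩, -⟩ := hdistinct
  have hc : c = t a b := h.eq_third hab (hQT (by simp))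
  have he : e = t a d := h.eq_third had (hQT (by simp))
  have hf : f = t b d := h.eq_third hbd (hQT (by simp))
  have hf' : f = t c e := h.eq_third hce (hQT (by simp))
  subst hc he hf
  exact ⟨(a, b, d), ⟨hnodup, hf'.symm⟩, rfl⟩

theorem IsThirdPoint.paschCount_eq (h : IsThirdPoint T t) (S : List (Fin 13 × Fin 13 × Fin 13))
    (hS : ∀ p ∈ S, IsPaschSeed t p)
    (hcover : ∀ a b d, IsPaschSeed t (a, b, d) → ∃ q ∈ S, paschOf t (a, b, d) = paschOf t q) :
    paschCount T = (S.map (paschOf t)).toFinset.card := by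
  have hiff : ∀ Q, Q ⊆ T ∧ IsPasch Q ↔ Q ∈ (S.map (paschOf t)).toFinset := by
    intro Q
    simp only [List.mem_toFinset, List.mem_map]
    constructor
    · rintro ⟨hQT, hQ⟩
      obtain ⟨⟨a, b, d⟩, hp, rfl⟩ := h.exists_paschSeed hQT hQ
      obtain ⟨q, hq, hpq⟩ := hcover a b d hp
      exact ⟨q, hq, hpq.symm⟩
    · rintro ⟨q, hq, rfl⟩
      exact ⟨h.paschOf_subset (hS q hq), isPasch_paschOf (hS q hq)⟩
  rw [paschCount, Nat.card_congr (Equiv.subtypeEquivRight hiff), Nat.card_eq_finsetCard]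

end PaschSeeds

theorem IsPasch.image {f : Fin 13 → Fin 13} (hf : Injective f) {Q : Finset (Finset (Fin 13))}
    (hQ : IsPasch Q) : IsPasch (Q.image fun B => B.image f) := by
  obtain ⟨a, b, c, d, e, f', hnodup, rfl⟩ := hQ
  refine ⟨f a, f b, f c, f d, f e, f f', by simpa using hnodup.map hf, ?_⟩
  simp [image_insert, image_singleton]

theorem paschCount_le_paschCount_image {f : Fin 13 → Fin 13} (hf : Injective f)
    (T : Finset (Finset (Fin 13))) : paschCount T ≤ paschCount (T.image fun B => B.image f) := by
  refine Nat.card_le_card_of_injective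
    (fun Q => ⟨Q.1.image fun B => B.image f, image_subset_image Q.2.1, Q.2.2.image hf⟩) ?_
  intro Q Q' hQQ'
  exact Subtype.ext (image_injective (image_injective hf) (congrArg Subtype.val hQQ'))

/-- `H₁` is developed mod 13 from the base blocks `{0,1,4}` and `{0,2,7}`, so the third point of
`{x, x + d}` is `x + cyclicOffset d`; the table is read off the differences of the base blocks. -/
def cyclicOffset : Fin 13 → Fin 13
  | 0 => 0 | 1 => 4 | 2 => 7 | 3 => 12 | 4 => 1 | 5 => 11 | 6 => 8 | 7 => 2 | 8 => 6
  | 9 => 10 | 10 => 9 | 11 => 5 | 12 => 3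

def third₁ (x y : Fin 13) : Fin 13 := x + cyclicOffset (y - x)

/-- The removed blocks form the Pasch configuration `{3,4,7}, {3,5,10}, {4,10,12}, {5,7,12}`;
`antipode` swaps each of its points with the one point of the configuration not collinear
with it. -/
def antipode : Equiv.Perm (Fin 13) := Equiv.swap 3 12 * Equiv.swap 4 5 * Equiv.swap 7 10

/-- The removed blocks are the blocks of `H₁` all of whose points are moved by `antipode`, and the
trade replaces the third point `z` of each of their pairs by `antipode z`. -/
def third₂ (x y : Fin 13) : Fin 13 :=
  if antipode x ≠ x ∧ antipode y ≠ y ∧ antipode (third₁ x y) ≠ third₁ x y then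
    antipode (third₁ x y)
  else third₁ x y

theorem mem_H₁ {B : Finset (Fin 13)} :
    B ∈ H₁ ↔ ∃ i : Fin 13, B = {i, i + 1, i + 4} ∨ B = {i, i + 2, i + 7} := by
  simp only [H₁, mem_union, mem_image, mem_univ, true_and, exists_or, eq_comm]

theorem isThirdPoint_H₁ : IsThirdPoint H₁ third₁ where
  third_ne_left := by decide +kernel
  third_ne_right := by decide +kernel
  triple_mem := by decide +kernel
  third_mem := by
    intro B hB
    obtain ⟨i, rfl | rfl⟩ := mem_H₁.mp hB <;> revert i <;> decide +kernel

theorem isThirdPoint_H₂ : IsThirdPoint H₂ third₂ where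
  third_ne_left := by decide +kernel
  third_ne_right := by decide +kernel
  triple_mem := by decide +kernel
  third_mem := by
    intro B hB
    simp only [H₂, mem_union, mem_sdiff] at hB
    rcases hB with ⟨hB₁, hB⟩ | hB
    · obtain ⟨i, rfl | rfl⟩ := mem_H₁.mp hB₁ <;> revert i hB <;> decide +kernel
    · simp only [addedTriples, mem_insert, mem_singleton] at hB
      rcases hB with rfl | rfl | rfl | rfl <;> decide +kernel

def paschSeeds₁ : List (Fin 13 × Fin 13 × Fin 13) :=
  [(0, 1, 7), (0, 2, 8), (0, 2, 11), (0, 3, 8), (0, 5, 8), (0, 5, 10), (1, 2, 8), (1, 3, 9),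
    (1, 6, 9), (1, 6, 11), (2, 3, 9), (2, 4, 10), (3, 4, 10)]

def paschSeeds₂ : List (Fin 13 × Fin 13 × Fin 13) :=
  [(0, 1, 7), (0, 2, 8), (0, 3, 8), (0, 5, 8), (1, 2, 11), (1, 3, 9), (2, 3, 9), (3, 4, 7)]

theorem paschCount_H₁ : paschCount H₁ = 13 := by
  rw [isThirdPoint_H₁.paschCount_eq paschSeeds₁ (by decide +kernel) (by decide +kernel)]
  decide +kernel

theorem paschCount_H₂ : paschCount H₂ = 8 := by
  rw [isThirdPoint_H₂.paschCount_eq paschSeeds₂ (by decide +kernel) (by decide +kernel)]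
  decide +kernel

/-- **Pasch counts separate the Steiner pair**: `H₁` contains exactly 13 Pasch
configurations, `H₂` contains exactly 8, and consequently no bijection of `ℤ₁₃`
carries the triples of `H₁` onto the triples of `H₂`. -/
theorem pasch_counts_and_non_isomorphic :
    paschCount H₁ = 13 ∧ paschCount H₂ = 8 ∧
    ¬ ∃ σ : Equiv.Perm (Fin 13), H₁.image (fun t => t.image σ) = H₂ := by
  refine ⟨paschCount_H₁, paschCount_H₂, ?_⟩
  rintro ⟨σ, hσ⟩
  have hle := paschCount_le_paschCount_image σ.injective H₁
  rw [hσ, paschCount_H₁, paschCount_H₂] at hle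
  omega
end
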